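/- There exist ε₀ > 0 and C ≥ 0, depending only on h, such that for every ε with |ε| ≤ ε₀ and every 1-periodic, nonnegative, continuous φ : ℝ → ℝ with ∫₀¹ φ = 1: the map g := g_{ε,φ} is a strictly increasing bijection of ℝ, and for all x, y ∈ ℝ, g'(g^{-1}(y)) / g'(g^{-1}(x)) ≤ e^{C|ε|·|x−y|}. -/

import Mathlib

open MeasureTheory

/-- The coupled map `g_{ε,φ}(x) = x + ε ∫₀¹ h(x,y) φ(y) dy`. -/
noncomputable def gmap (h : ℝ → ℝ → ℝ) (ε : ℝ) (φ : ℝ → ℝ) : ℝ → ℝ :=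
  fun x => x + ε * ∫ y in (0:ℝ)..1, h x y * φ y

/-- The transfer operator of `g_{ε,φ}` applied to `u`: `(u / g') ∘ g⁻¹`. -/
noncomputable def Lop (h : ℝ → ℝ → ℝ) (ε : ℝ) (φ u : ℝ → ℝ) : ℝ → ℝ :=
  fun x => u (Function.invFun (gmap h ε φ) x) /
    deriv (gmap h ε φ) (Function.invFun (gmap h ε φ) x)

/-- The transfer operator of the doubling map. -/
noncomputable def Pop (ψ : ℝ → ℝ) : ℝ → ℝ :=
  fun x => (1/2) * ψ (x/2) + (1/2) * ψ ((x+1)/2)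

/-- The self-consistent transfer operator `T_ε φ = P (L_{ε,φ} φ)`. -/
noncomputable def Tsc (h : ℝ → ℝ → ℝ) (ε : ℝ) (φ : ℝ → ℝ) : ℝ → ℝ :=
  Pop (Lop h ε φ φ)

/-- `h` is 1-periodic in each variable. -/
def periodicH (h : ℝ → ℝ → ℝ) : Prop :=
  (∀ x y, h (x+1) y = h x y) ∧ (∀ x y, h x (y+1) = h x y)

/-- `B_L`: 1-periodic, nonnegative, `L`-Lipschitz densities with `∫₀¹ φ = 1`. -/
def memB (L : ℝ) (φ : ℝ → ℝ) : Prop :=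
  (∀ x, φ (x+1) = φ x) ∧ (∀ x, 0 ≤ φ x) ∧
  (∀ x y, |φ x - φ y| ≤ L * |x - y|) ∧ (∫ x in (0:ℝ)..1, φ x) = 1

open Function Real Filter

/-!
Differentiating under the integral, `g' = 1 + ε ∫₀¹ ∂ₓh(·, y) φ(y) dy`. Since `∂ₓh` is `C¹` and
`ℤ²`-periodic it is bounded by some `M` and `K`-Lipschitz, and averaging against the probability
density `φ` keeps both bounds. So for `|ε| ≤ 1 / (2(M + 1))` we get `g' ≥ 1/2`, which makes `g` an
increasing bijection with `2`-Lipschitz inverse, while `g'` is `|ε|K`-Lipschitz. With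
`a = g⁻¹ y`, `b = g⁻¹ x` this gives `g'(a) / g'(b) ≤ 1 + 2|ε|K|a - b| ≤ exp (4K|ε||x - y|)`.
-/

theorem Function.Periodic.fderiv {E F : Type*} [NormedAddCommGroup E] [NormedSpace ℝ E]
    [NormedAddCommGroup F] [NormedSpace ℝ F] {f : E → F} {c : E} (hf : Periodic f c) :
    Periodic (fderiv ℝ f) c := fun x => by
  rw [← fderiv_comp_add_right, hf.funext]

section DoublyPeriodic

variable {E : Type*} [NormedAddCommGroup E] {f : ℝ × ℝ → E}

theorem Continuous.exists_norm_le_of_periodic (hf : Continuous f) (h₁ : Periodic f (1, 0))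
    (h₂ : Periodic f (0, 1)) : ∃ M, ∀ p, ‖f p‖ ≤ M := by
  obtain ⟨M, hM⟩ := (isCompact_Icc (a := ((0 : ℝ), (0 : ℝ))) (b := (1, 1)))
    |>.exists_bound_of_continuousOn hf.continuousOn
  refine ⟨M, fun p => ?_⟩
  have hfract : f p = f (Int.fract p.1, Int.fract p.2) := by
    rw [← h₁.sub_zsmul_eq ⌊p.1⌋, ← h₂.sub_zsmul_eq ⌊p.2⌋]
    congr 1
    ext <;> simp
  rw [hfract]
  exact hM _ ⟨⟨Int.fract_nonneg _, Int.fract_nonneg _⟩,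
    ⟨(Int.fract_lt_one _).le, (Int.fract_lt_one _).le⟩⟩

theorem ContDiff.exists_lipschitzWith_of_periodic [NormedSpace ℝ E] (hf : ContDiff ℝ 1 f)
    (h₁ : Periodic f (1, 0)) (h₂ : Periodic f (0, 1)) : ∃ K, LipschitzWith K f := by
  obtain ⟨M, hM⟩ :=
    (hf.continuous_fderiv one_ne_zero).exists_norm_le_of_periodic h₁.fderiv h₂.fderiv
  refine ⟨M.toNNReal,
    lipschitzWith_of_nnnorm_fderiv_le (hf.differentiable one_ne_zero) fun p => ?_⟩
  rw [← NNReal.coe_le_coe, coe_nnnorm]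
  exact (hM p).trans (le_coe_toNNReal M)

end DoublyPeriodic

section AveragingAgainstDensity

variable {φ : ℝ → ℝ}

theorem abs_intervalIntegral_mul_le (hφ : Continuous φ) (hφ0 : ∀ y, 0 ≤ φ y)
    (hφ1 : ∫ y in (0 : ℝ)..1, φ y = 1) {u : ℝ → ℝ} {M : ℝ} (hM : ∀ y, |u y| ≤ M) :
    |∫ y in (0 : ℝ)..1, u y * φ y| ≤ M := by
  rw [← Real.norm_eq_abs]
  calc ‖∫ y in (0 : ℝ)..1, u y * φ y‖ ≤ ∫ y in (0 : ℝ)..1, M * φ y :=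
        intervalIntegral.norm_integral_le_of_norm_le zero_le_one
          (Eventually.of_forall fun y _ => ?_)
          ((continuous_const.mul hφ : Continuous fun y => M * φ y).intervalIntegrable 0 1)
    _ = M := by rw [intervalIntegral.integral_const_mul, hφ1, mul_one]
  rw [Real.norm_eq_abs, abs_mul, abs_of_nonneg (hφ0 y)]
  exact mul_le_mul_of_nonneg_right (hM y) (hφ0 y)

theorem hasDerivAt_intervalIntegral_mul (hφ : Continuous φ) {k k' : ℝ → ℝ → ℝ}
    (hk : ∀ x, Continuous (k x)) (hk' : ∀ x, Continuous (k' x)) {M : ℝ}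
    (hM : ∀ x y, |k' x y| ≤ M) (hkk' : ∀ x y, HasDerivAt (k · y) (k' x y) x) (x₀ : ℝ) :
    HasDerivAt (fun x => ∫ y in (0 : ℝ)..1, k x y * φ y)
      (∫ y in (0 : ℝ)..1, k' x₀ y * φ y) x₀ :=
  (intervalIntegral.hasDerivAt_integral_of_dominated_loc_of_deriv_le (bound := fun y => M * |φ y|)
    univ_mem (Eventually.of_forall fun x => ((hk x).mul hφ).aestronglyMeasurable)
    (((hk x₀).mul hφ).intervalIntegrable 0 1) ((hk' x₀).mul hφ).aestronglyMeasurable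
    (Eventually.of_forall fun y _ x _ => by
      rw [Real.norm_eq_abs, abs_mul]
      exact mul_le_mul_of_nonneg_right (hM x y) (abs_nonneg _))
    ((continuous_const.mul hφ.abs).intervalIntegrable 0 1)
    (Eventually.of_forall fun y _ x _ => (hkk' x y).mul_const (φ y))).2

end AveragingAgainstDensity

section ExpandingMaps

variable {g g' : ℝ → ℝ} {c : ℝ}

theorem monotone_sub_mul_of_le_hasDerivAt (hg : ∀ x, HasDerivAt g (g' x) x)
    (hc : ∀ x, c ≤ g' x) : Monotone fun x => g x - c * x :=
  monotone_of_hasDerivAt_nonneg (fun x => (hg x).sub ((hasDerivAt_id x).const_mul c))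
    fun x => by simpa using hc x

theorem mul_abs_sub_le_abs_sub_of_le_hasDerivAt (hg : ∀ x, HasDerivAt g (g' x) x)
    (hc : ∀ x, c ≤ g' x) (hc0 : 0 ≤ c) (a b : ℝ) : c * |a - b| ≤ |g a - g b| := by
  wlog hab : a ≤ b generalizing a b
  · rw [abs_sub_comm a, abs_sub_comm (g a)]
    exact this b a (le_of_not_ge hab)
  have : g a - c * a ≤ g b - c * b := monotone_sub_mul_of_le_hasDerivAt hg hc hab
  rw [abs_of_nonpos (sub_nonpos.2 hab), abs_of_nonpos (by nlinarith)]
  linarith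

theorem surjective_of_pos_le_hasDerivAt (hg : ∀ x, HasDerivAt g (g' x) x)
    (hc : ∀ x, c ≤ g' x) (hc0 : 0 < c) : Surjective g := by
  have hmono := monotone_sub_mul_of_le_hasDerivAt hg hc
  refine Continuous.surjective (continuous_iff_continuousAt.2 fun x => (hg x).continuousAt) ?_ ?_
  · refine tendsto_atTop_mono' _ ((eventually_ge_atTop 0).mono fun x hx => ?_)
      (tendsto_atTop_add_const_left _ (g 0) (tendsto_id.const_mul_atTop hc0))
    show g 0 + c * x ≤ g x
    linarith [show g 0 - c * 0 ≤ g x - c * x from hmono hx]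
  · refine tendsto_atBot_mono' _ ((eventually_le_atBot 0).mono fun x hx => ?_)
      (tendsto_atBot_add_const_left _ (g 0) (tendsto_id.const_mul_atBot hc0))
    show g x ≤ g 0 + c * x
    linarith [show g x - c * x ≤ g 0 - c * 0 from hmono hx]

theorem div_le_exp_of_abs_sub_le {u v K : ℝ} (hc0 : 0 < c) (hv : c ≤ v) (huv : |u - v| ≤ K) :
    u / v ≤ exp (K / c) := by
  have hv0 : 0 < v := hc0.trans_le hv
  calc u / v = 1 + (u - v) / v := by field_simp; ring
    _ ≤ 1 + K / c := by
      have hK : 0 ≤ K := (abs_nonneg _).trans huv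
      have : (u - v) / v ≤ K / c := calc
        (u - v) / v ≤ |u - v| / v := by gcongr; exact le_abs_self _
        _ ≤ K / v := by gcongr
        _ ≤ K / c := by gcongr
      linarith
    _ ≤ exp (K / c) := by linarith [add_one_le_exp (K / c)]

theorem deriv_invFun_div_le_exp (hg : ∀ x, HasDerivAt g (g' x) x) (hc : ∀ x, c ≤ g' x)
    (hc0 : 0 < c) {L : ℝ} (hL : ∀ a b, |g' a - g' b| ≤ L * |a - b|) (x y : ℝ) :
    deriv g (invFun g y) / deriv g (invFun g x) ≤ exp (L / c ^ 2 * |x - y|) := by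
  have hsurj := surjective_of_pos_le_hasDerivAt hg hc hc0
  have hL0 : 0 ≤ L := by simpa using (abs_nonneg _).trans (hL 1 0)
  set a := invFun g y
  set b := invFun g x
  have hab : c * |a - b| ≤ |y - x| := by
    simpa only [a, b, invFun_eq (hsurj y), invFun_eq (hsurj x)] using
      mul_abs_sub_le_abs_sub_of_le_hasDerivAt hg hc hc0.le a b
  rw [(hg a).deriv, (hg b).deriv]
  refine (div_le_exp_of_abs_sub_le (K := L * (|y - x| / c)) hc0 (hc b)
    ((hL a b).trans ?_)).trans_eq ?_
  · exact mul_le_mul_of_nonneg_left ((le_div_iff₀' hc0).2 hab) hL0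
  · rw [abs_sub_comm y x]; field_simp

end ExpandingMaps

noncomputable def partialFst (h : ℝ → ℝ → ℝ) (x y : ℝ) : ℝ :=
  fderiv ℝ (uncurry h) (x, y) (1, 0)

noncomputable def gmapDeriv (h : ℝ → ℝ → ℝ) (ε : ℝ) (φ : ℝ → ℝ) (x : ℝ) : ℝ :=
  1 + ε * ∫ y in (0 : ℝ)..1, partialFst h x y * φ y

section CoupledMap

variable {h : ℝ → ℝ → ℝ}

theorem hasDerivAt_partialFst (hh : Differentiable ℝ (uncurry h)) (x y : ℝ) :
    HasDerivAt (h · y) (partialFst h x y) x :=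
  HasFDerivAt.comp_hasDerivAt (l := uncurry h) x (hh (x, y)).hasFDerivAt
    ((hasDerivAt_id' x).prodMk (hasDerivAt_const x y))

theorem contDiff_partialFst (hh : ContDiff ℝ 2 (uncurry h)) :
    ContDiff ℝ 1 (uncurry (partialFst h)) :=
  (ContinuousLinearMap.apply ℝ ℝ ((1 : ℝ), (0 : ℝ))).contDiff.comp
    (hh.fderiv_right (by norm_num))

theorem periodicH.periodic_uncurry_partialFst (hper : periodicH h) :
    Periodic (uncurry (partialFst h)) (1, 0) ∧ Periodic (uncurry (partialFst h)) (0, 1) := by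
  have h₁ : Periodic (uncurry h) (1, 0) := fun p => by
    simp only [uncurry, Prod.fst_add, Prod.snd_add, add_zero, hper.1]
  have h₂ : Periodic (uncurry h) (0, 1) := fun p => by
    simp only [uncurry, Prod.fst_add, Prod.snd_add, add_zero, hper.2]
  exact ⟨fun p => congrArg (· (1, 0)) (h₁.fderiv p),
    fun p => congrArg (· (1, 0)) (h₂.fderiv p)⟩

theorem exists_bound_lipschitz_partialFst (hh : ContDiff ℝ 2 (uncurry h)) (hper : periodicH h) :
    ∃ M K : ℝ, 0 ≤ K ∧ (∀ x y, |partialFst h x y| ≤ M) ∧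
      ∀ x x' y, |partialFst h x y - partialFst h x' y| ≤ K * |x - x'| := by
  obtain ⟨h₁, h₂⟩ := hper.periodic_uncurry_partialFst
  obtain ⟨M, hM⟩ := (contDiff_partialFst hh).continuous.exists_norm_le_of_periodic h₁ h₂
  obtain ⟨K, hK⟩ := (contDiff_partialFst hh).exists_lipschitzWith_of_periodic h₁ h₂
  refine ⟨M, K, K.2, fun x y => hM (x, y), fun x x' y => ?_⟩
  simpa [Real.dist_eq, Prod.dist_eq] using hK.dist_le_mul (x, y) (x', y)

variable {ε M K : ℝ} {φ : ℝ → ℝ}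

theorem hasDerivAt_gmap (hh : ContDiff ℝ 2 (uncurry h)) (hM : ∀ x y, |partialFst h x y| ≤ M)
    (hφ : Continuous φ) (x : ℝ) : HasDerivAt (gmap h ε φ) (gmapDeriv h ε φ x) x :=
  (hasDerivAt_id x).add <| (hasDerivAt_intervalIntegral_mul hφ
    (fun x => hh.continuous.comp (Continuous.prodMk_right x))
    (fun x => (contDiff_partialFst hh).continuous.comp (Continuous.prodMk_right x)) hM
    (hasDerivAt_partialFst (hh.differentiable two_ne_zero)) x).const_mul ε

theorem sub_abs_mul_le_gmapDeriv (hφ : Continuous φ) (hφ0 : ∀ y, 0 ≤ φ y)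
    (hφ1 : ∫ y in (0 : ℝ)..1, φ y = 1) (hM : ∀ x y, |partialFst h x y| ≤ M) (x : ℝ) :
    1 - |ε| * M ≤ gmapDeriv h ε φ x := by
  set I := ∫ y in (0 : ℝ)..1, partialFst h x y * φ y
  have hI : |ε * I| ≤ |ε| * M := by
    rw [abs_mul]
    exact mul_le_mul_of_nonneg_left (abs_intervalIntegral_mul_le hφ hφ0 hφ1 (hM x))
      (abs_nonneg ε)
  linarith [neg_abs_le (ε * I), show gmapDeriv h ε φ x = 1 + ε * I from rfl]

theorem abs_gmapDeriv_sub_le (hφ : Continuous φ) (hφ0 : ∀ y, 0 ≤ φ y)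
    (hφ1 : ∫ y in (0 : ℝ)..1, φ y = 1) (hh : ContDiff ℝ 2 (uncurry h))
    (hK : ∀ x x' y, |partialFst h x y - partialFst h x' y| ≤ K * |x - x'|) (a b : ℝ) :
    |gmapDeriv h ε φ a - gmapDeriv h ε φ b| ≤ |ε| * K * |a - b| := by
  have hint (x : ℝ) : IntervalIntegrable (fun y => partialFst h x y * φ y) volume 0 1 :=
    (((contDiff_partialFst hh).continuous.comp (Continuous.prodMk_right x)).mul hφ)
      |>.intervalIntegrable 0 1
  have hdiff : gmapDeriv h ε φ a - gmapDeriv h ε φ b =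
      ε * ∫ y in (0 : ℝ)..1, (partialFst h a y - partialFst h b y) * φ y := by
    simp only [gmapDeriv, sub_mul, intervalIntegral.integral_sub (hint a) (hint b)]
    ring
  rw [hdiff, abs_mul, mul_assoc]
  exact mul_le_mul_of_nonneg_left (abs_intervalIntegral_mul_le hφ hφ0 hφ1 (hK a b))
    (abs_nonneg ε)

end CoupledMap

/-- Distortion estimate for the coupled map: `g'(g⁻¹(y)) / g'(g⁻¹(x)) ≤ e^{C|ε||x−y|}`. -/
theorem stmt9 (h : ℝ → ℝ → ℝ) (hC2 : ContDiff ℝ 2 (Function.uncurry h))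
    (hper : periodicH h) :
    ∃ ε₀ > (0:ℝ), ∃ C ≥ (0:ℝ), ∀ ε : ℝ, |ε| ≤ ε₀ →
      ∀ φ : ℝ → ℝ, (∀ x, φ (x+1) = φ x) → (∀ x, 0 ≤ φ x) → Continuous φ →
        (∫ x in (0:ℝ)..1, φ x) = 1 →
        StrictMono (gmap h ε φ) ∧ Function.Bijective (gmap h ε φ) ∧
        ∀ x y : ℝ,
          deriv (gmap h ε φ) (Function.invFun (gmap h ε φ) y) /
            deriv (gmap h ε φ) (Function.invFun (gmap h ε φ) x)
          ≤ Real.exp (C * |ε| * |x - y|) := by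
  obtain ⟨M, K, hK0, hM, hK⟩ := exists_bound_lipschitz_partialFst hC2 hper
  have hM0 : 0 ≤ M := (abs_nonneg _).trans (hM 0 0)
  refine ⟨(2 * (M + 1))⁻¹, by positivity, 4 * K, by positivity,
    fun ε hε φ _ hφ0 hφ hφ1 => ?_⟩
  have hεM : |ε| * M ≤ 1 / 2 := calc
    |ε| * M ≤ (2 * (M + 1))⁻¹ * (M + 1) := mul_le_mul hε (by linarith) hM0 (by positivity)
    _ = 1 / 2 := by field_simp
  have hderiv := hasDerivAt_gmap (ε := ε) hC2 hM hφ
  have hlow (x : ℝ) : 1 / 2 ≤ gmapDeriv h ε φ x :=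
    (by linarith : (1 : ℝ) / 2 ≤ 1 - |ε| * M).trans
      (sub_abs_mul_le_gmapDeriv hφ hφ0 hφ1 hM x)
  have hmono := strictMono_of_hasDerivAt_pos hderiv fun x => by linarith [hlow x]
  refine ⟨hmono, ⟨hmono.injective, surjective_of_pos_le_hasDerivAt hderiv hlow one_half_pos⟩,
    fun x y => ?_⟩
  calc _ ≤ exp (|ε| * K / (1 / 2) ^ 2 * |x - y|) := deriv_invFun_div_le_exp hderiv hlow
          one_half_pos (abs_gmapDeriv_sub_le hφ hφ0 hφ1 hC2 hK) x y
    _ = exp (4 * K * |ε| * |x - y|) := by ring_nf
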